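/- Let ρ_τ(x) = x(τ − 1{x<0}) for τ ∈ (0,1), and let W ~ N(0, σ²) with σ² > 0. Then for any real ξ, E[ρ_τ(ξ − W)] = (τ−1)ξ + ξΦ(ξ; 0, σ²) + σ² φ(ξ; 0, σ²). -/

import Mathlib

/-!
Write `f w = (ξ - w) φ(w)`. Since `ρ_τ(x) = τx - x·1{x<0}`, the expectation is
`τ ∫ f - ∫_{w > ξ} f`. The full integral is `ξ` because `φ` has mass one and mean zero.
On `(ξ, ∞)` the mass of `φ` is `1 - Φ(ξ)`, while `∫_ξ^∞ w φ(w) dw = σ² φ(ξ)` because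
`-σ² φ` is an antiderivative of `w φ(w)` that vanishes at infinity.
-/

open MeasureTheory ProbabilityTheory Real

/-- The `N(0, σ²)` density. -/
noncomputable def gpdf (s2 x : ℝ) : ℝ :=
  (Real.sqrt (2 * Real.pi * s2))⁻¹ * Real.exp (-(x ^ 2) / (2 * s2))

/-- The `N(0, σ²)` cumulative distribution function. -/
noncomputable def gcdf (s2 x : ℝ) : ℝ := ∫ t in Set.Iic x, gpdf s2 t

/-- The quantile-regression check function `ρ_τ(x) = x(τ − 1{x<0})`. -/
noncomputable def checkFn (τ x : ℝ) : ℝ := x * (τ - if x < 0 then 1 else 0)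

open Filter Topology

lemma gpdf_eq_gaussianPDFReal {s2 : ℝ} (hs2 : 0 ≤ s2) :
    gpdf s2 = gaussianPDFReal 0 ⟨s2, hs2⟩ := by
  funext x
  simp [gpdf, gaussianPDFReal]
  rfl

lemma integrable_gpdf {s2 : ℝ} (hs2 : 0 ≤ s2) : Integrable (gpdf s2) := by
  rw [gpdf_eq_gaussianPDFReal hs2]
  exact integrable_gaussianPDFReal 0 _

lemma integral_gpdf {s2 : ℝ} (hs2 : 0 < s2) : ∫ w, gpdf s2 w = 1 := by
  rw [gpdf_eq_gaussianPDFReal hs2.le]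
  exact integral_gaussianPDFReal_eq_one 0 fun h => hs2.ne' (congrArg NNReal.toReal h)

lemma integrable_mul_gpdf {s2 : ℝ} (hs2 : 0 < s2) : Integrable fun w => w * gpdf s2 w := by
  refine ((integrable_mul_exp_neg_mul_sq (b := (2 * s2)⁻¹) (by positivity)).const_mul
    (√(2 * π * s2))⁻¹).congr (Eventually.of_forall fun x => ?_)
  have hexponent : -(2 * s2)⁻¹ * x ^ 2 = -(x ^ 2) / (2 * s2) := by ring
  simp only [gpdf, hexponent]
  ring

lemma integral_mul_gpdf (s2 : ℝ) : ∫ w, w * gpdf s2 w = 0 := by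
  have hodd : ∀ w, -w * gpdf s2 (-w) = -(w * gpdf s2 w) := fun w => by
    simp only [gpdf, neg_sq]
    ring
  have h := integral_neg_eq_self (fun w => w * gpdf s2 w) volume
  simp only [hodd, integral_neg] at h
  linarith

lemma hasDerivAt_gpdf {s2 : ℝ} (hs2 : s2 ≠ 0) (x : ℝ) :
    HasDerivAt (gpdf s2) (-(x / s2) * gpdf s2 x) x := by
  have hexp : HasDerivAt (fun w : ℝ => -(w ^ 2) / (2 * s2)) (-(x / s2)) x :=
    ((hasDerivAt_pow 2 x).neg.div_const (2 * s2)).congr_deriv (by field_simp; ring)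
  exact (hexp.exp.const_mul (√(2 * π * s2))⁻¹).congr_deriv (by rw [gpdf]; ring)

lemma tendsto_gpdf_atTop {s2 : ℝ} (hs2 : 0 < s2) : Tendsto (gpdf s2) atTop (𝓝 0) := by
  have hexponent : Tendsto (fun w : ℝ => -(w ^ 2) / (2 * s2)) atTop atBot :=
    (tendsto_neg_atTop_atBot.comp (tendsto_pow_atTop two_ne_zero)).atBot_div_const
      (by positivity)
  have h := (tendsto_exp_atBot.comp hexponent).const_mul (√(2 * π * s2))⁻¹
  rwa [mul_zero] at h

lemma integral_Ioi_mul_gpdf {s2 : ℝ} (hs2 : 0 < s2) (ξ : ℝ) :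
    ∫ w in Set.Ioi ξ, w * gpdf s2 w = s2 * gpdf s2 ξ := by
  have hderiv : ∀ x ∈ Set.Ici ξ, HasDerivAt (fun w => -s2 * gpdf s2 w) (x * gpdf s2 x) x :=
    fun x _ => ((hasDerivAt_gpdf hs2.ne' x).const_mul (-s2)).congr_deriv (by field_simp)
  have hlim : Tendsto (fun w => -s2 * gpdf s2 w) atTop (𝓝 0) := by
    simpa using (tendsto_gpdf_atTop hs2).const_mul (-s2)
  rw [integral_Ioi_of_hasDerivAt_of_tendsto' hderiv (integrable_mul_gpdf hs2).integrableOn hlim]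
  ring

lemma integral_Ioi_gpdf {s2 : ℝ} (hs2 : 0 < s2) (ξ : ℝ) :
    ∫ w in Set.Ioi ξ, gpdf s2 w = 1 - gcdf s2 ξ := by
  have h := intervalIntegral.integral_Iic_add_Ioi (b := ξ) (μ := volume)
    (integrable_gpdf hs2.le).integrableOn (integrable_gpdf hs2.le).integrableOn
  rw [integral_gpdf hs2] at h
  rw [gcdf]
  linarith

lemma checkFn_eq_sub_indicator (τ x : ℝ) :
    checkFn τ x = τ * x - (Set.Iio 0).indicator id x := by
  by_cases hx : x < 0 <;> simp [checkFn, hx, Set.indicator] <;> ring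

lemma integral_sub_mul_gpdf {s2 : ℝ} (hs2 : 0 < s2) (ξ : ℝ) (s : Set ℝ) :
    ∫ w in s, (ξ - w) * gpdf s2 w =
      ξ * (∫ w in s, gpdf s2 w) - ∫ w in s, w * gpdf s2 w := by
  simp only [sub_mul]
  rw [integral_sub ((integrable_gpdf hs2.le).integrableOn.const_mul ξ)
    (integrable_mul_gpdf hs2).integrableOn, integral_const_mul]

theorem check_loss_gaussian_general (τ : ℝ) (s2 : ℝ) (hs2 : 0 < s2)
    (ξ : ℝ) :
    ∫ w : ℝ, checkFn τ (ξ - w) * gpdf s2 w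
      = (τ - 1) * ξ + ξ * gcdf s2 ξ + s2 * gpdf s2 ξ := by
  set f : ℝ → ℝ := fun w => (ξ - w) * gpdf s2 w
  have hf : Integrable f :=
    ((integrable_gpdf hs2.le).const_mul ξ).sub (integrable_mul_gpdf hs2) |>.congr
      (Eventually.of_forall fun w => by simp [f, sub_mul])
  have hsplit : ∀ w, checkFn τ (ξ - w) * gpdf s2 w = τ * f w - (Set.Ioi ξ).indicator f w := by
    intro w
    by_cases hw : ξ < w <;>
      simp [checkFn_eq_sub_indicator, f, Set.indicator, hw, sub_mul, mul_assoc]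
  have hfull : ∫ w, f w = ξ := by
    simpa [integral_gpdf hs2, integral_mul_gpdf] using
      integral_sub_mul_gpdf hs2 ξ Set.univ
  have htail : ∫ w in Set.Ioi ξ, f w = ξ * (1 - gcdf s2 ξ) - s2 * gpdf s2 ξ := by
    rw [integral_sub_mul_gpdf hs2 ξ (Set.Ioi ξ), integral_Ioi_gpdf hs2,
      integral_Ioi_mul_gpdf hs2]
  simp only [hsplit]
  rw [integral_sub (hf.const_mul τ) (hf.indicator measurableSet_Ioi),
    integral_indicator measurableSet_Ioi, integral_const_mul, hfull, htail]
  ring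

/-- For `W ~ N(0, σ²)` with `σ² > 0` and `τ ∈ (0,1)`, for any real `ξ`,
`E[ρ_τ(ξ − W)] = (τ−1)ξ + ξΦ(ξ; 0, σ²) + σ² φ(ξ; 0, σ²)`. -/
theorem check_loss_gaussian (τ : ℝ) (hτ : τ ∈ Set.Ioo (0:ℝ) 1) (s2 : ℝ) (hs2 : 0 < s2)
    (ξ : ℝ) :
    ∫ w : ℝ, checkFn τ (ξ - w) * gpdf s2 w
      = (τ - 1) * ξ + ξ * gcdf s2 ξ + s2 * gpdf s2 ξ :=
  check_loss_gaussian_general τ s2 hs2 ξ
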